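/- arXiv:2004.11290 — 2 statements merged into one kernel-verified Lean document; each statement's English description precedes it below -/
import Mathlib

section
/- For every s > 0, g₀(s) < ℓ·s. -/
/-
Test the infimum with the parabola `γ = 4 m² (t - t²)`, whose square root lies between
`2 m (t - t²)` and `m`. Bounding the integrand by `s f₁(√γ) + |γ'| / 2` and using
`f₁ r ≤ ℓ - ℓ₁ r / 2` near `0` (from the limit hypothesis) gives an energy at most
`s ℓ - s ℓ₁ m / 6 + 2 m²`: the gain from the linear decrease of `f₁` at `0` is of first order
in `m`, the cost of the transition `|γ'|` only of second order, so small `m` beats `s ℓ`.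
-/

open MeasureTheory Set Filter

/-- Hypotheses on the function `f₁` from Section 6.1 of the paper. -/
structure F1Hyp (ℓ ℓ₁ : ℝ) (f₁ : ℝ → ℝ) : Prop where
  hl : 0 < ℓ
  hl1 : 0 < ℓ₁
  cont : ContinuousOn f₁ (Icc 0 1)
  diff : ∃ d : ℝ → ℝ, ContinuousOn d (Ioc 0 1) ∧
    ∀ t ∈ Ioc (0:ℝ) 1, HasDerivWithinAt f₁ (d t) (Ioc 0 1) t
  anti : StrictAntiOn f₁ (Icc 0 1)
  nonneg : ∀ t ∈ Icc (0:ℝ) 1, 0 ≤ f₁ t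
  f10 : f₁ 0 = ℓ
  f11 : f₁ 1 = 0
  convexSqrt : ConvexOn ℝ (Icc 0 1) (fun u => f₁ (Real.sqrt u))
  lim0 : Tendsto (fun s => (f₁ s - ℓ + ℓ₁ * s) / s) (nhdsWithin 0 (Ioi 0)) (nhds 0)

/-- `γ` is admissible, with a.e. derivative `γ'` (absolute continuity is encoded by the
fundamental theorem of calculus representation with an `L¹` derivative). -/
def Admissible (γ γ' : ℝ → ℝ) : Prop :=
  IntegrableOn γ' (Icc 0 1) ∧
  (∀ t ∈ Icc (0:ℝ) 1, γ t = ∫ u in (0:ℝ)..t, γ' u) ∧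
  (∀ t ∈ Icc (0:ℝ) 1, 0 ≤ γ t ∧ γ t ≤ 1) ∧
  γ 0 = 0 ∧ γ 1 = 0

/-- The energy in the characterization (6.11). -/
noncomputable def energy (f₁ : ℝ → ℝ) (s : ℝ) (γ γ' : ℝ → ℝ) : ℝ :=
  ∫ t in (0:ℝ)..1, Real.sqrt (s ^ 2 * (f₁ (Real.sqrt (γ t))) ^ 2 + (γ' t) ^ 2 / 4)

/-- The cohesive energy density of pristine material, via characterization (6.11). -/
noncomputable def g0 (f₁ : ℝ → ℝ) (s : ℝ) : ℝ :=
  sInf {x | ∃ γ γ' : ℝ → ℝ, Admissible γ γ' ∧ x = energy f₁ s γ γ'}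

lemma sqrt_sq_add_sq_div_four_le {a : ℝ} (ha : 0 ≤ a) (b : ℝ) :
    Real.sqrt (a ^ 2 + b ^ 2 / 4) ≤ a + |b| / 2 := by
  rw [Real.sqrt_le_iff]
  refine ⟨by positivity, ?_⟩
  nlinarith [sq_abs b, abs_nonneg b]

lemma integral_sub_sq_zero_one : ∫ t in (0:ℝ)..1, (t - t ^ 2) = 1 / 6 := by
  rw [intervalIntegral.integral_sub intervalIntegral.intervalIntegrable_id
    (intervalIntegral.intervalIntegrable_pow 2), integral_id, integral_pow]
  norm_num

lemma g0_le_energy (f₁ : ℝ → ℝ) (s : ℝ) {γ γ' : ℝ → ℝ} (h : Admissible γ γ') :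
    g0 f₁ s ≤ energy f₁ s γ γ' := by
  refine csInf_le ⟨0, ?_⟩ ⟨γ, γ', h, rfl⟩
  rintro x ⟨-, -, -, rfl⟩
  exact intervalIntegral.integral_nonneg zero_le_one fun _ _ => Real.sqrt_nonneg _

lemma F1Hyp.exists_le_sub_mul {ℓ ℓ₁ : ℝ} {f₁ : ℝ → ℝ} (hf : F1Hyp ℓ ℓ₁ f₁) :
    ∃ δ > 0, ∀ r, 0 ≤ r → r < δ → f₁ r ≤ ℓ - ℓ₁ / 2 * r := by
  obtain ⟨δ, hδ, hlim⟩ := Metric.tendsto_nhdsWithin_nhds.mp hf.lim0 (ℓ₁ / 2) (by linarith [hf.hl1])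
  refine ⟨δ, hδ, fun r hr hrδ => ?_⟩
  rcases hr.eq_or_lt with rfl | hr
  · simp [hf.f10]
  have hquot := hlim (mem_Ioi.mpr hr) (by rwa [Real.dist_eq, sub_zero, abs_of_pos hr])
  rw [Real.dist_eq, sub_zero] at hquot
  have := (div_lt_iff₀ hr).mp ((le_abs_self _).trans_lt hquot)
  linarith

def parabola (m t : ℝ) : ℝ := 4 * m ^ 2 * (t - t ^ 2)

def parabolaDeriv (m t : ℝ) : ℝ := 4 * m ^ 2 * (1 - 2 * t)

lemma hasDerivAt_parabola (m t : ℝ) : HasDerivAt (parabola m) (parabolaDeriv m t) t := by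
  have h : HasDerivAt (fun t : ℝ => t - t ^ 2) (1 - 2 * t) t := by
    simpa using (hasDerivAt_id t).fun_sub (hasDerivAt_pow 2 t)
  exact h.const_mul (4 * m ^ 2)

lemma parabola_le_sq (m t : ℝ) : parabola m t ≤ m ^ 2 := by
  unfold parabola
  nlinarith [sq_nonneg (m * (2 * t - 1))]

lemma admissible_parabola {m : ℝ} (hm : |m| ≤ 1) :
    Admissible (parabola m) (parabolaDeriv m) := by
  have hderiv_cont : Continuous (parabolaDeriv m) := by unfold parabolaDeriv; fun_prop
  refine ⟨hderiv_cont.integrableOn_Icc, fun t _ => ?_, fun t ht => ⟨?_, ?_⟩,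
    by simp [parabola], by simp [parabola]⟩
  · rw [intervalIntegral.integral_eq_sub_of_hasDerivAt (fun u _ => hasDerivAt_parabola m u)
      (hderiv_cont.intervalIntegrable 0 t)]
    simp [parabola]
  · have : 0 ≤ t - t ^ 2 := by nlinarith [ht.1, ht.2]
    unfold parabola
    positivity
  · exact (parabola_le_sq m t).trans (by nlinarith [sq_abs m, abs_nonneg m])

lemma sqrt_parabola_mem_Icc {m t : ℝ} (hm : 0 ≤ m) (ht : t ∈ Icc (0:ℝ) 1) :
    Real.sqrt (parabola m t) ∈ Icc (2 * m * (t - t ^ 2)) m := by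
  obtain ⟨ht0, ht1⟩ := ht
  constructor
  · apply Real.le_sqrt_of_sq_le
    unfold parabola
    have : 0 ≤ m ^ 2 * ((t - t ^ 2) * (1 - (t - t ^ 2))) :=
      mul_nonneg (sq_nonneg m) (mul_nonneg (by nlinarith) (by nlinarith))
    nlinarith
  · rw [Real.sqrt_le_left hm]
    exact parabola_le_sq m t

lemma abs_parabolaDeriv_le {m t : ℝ} (ht : t ∈ Icc (0:ℝ) 1) :
    |parabolaDeriv m t| ≤ 4 * m ^ 2 := by
  rw [parabolaDeriv, abs_mul, abs_of_nonneg (by positivity)]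
  exact mul_le_of_le_one_right (by positivity)
    (abs_le.mpr ⟨by linarith [ht.2], by linarith [ht.1]⟩)

section ParabolaEnergy

variable {f₁ : ℝ → ℝ} {ℓ c s m : ℝ}

lemma energy_integrand_parabola_le (hnonneg : ∀ r ∈ Icc (0:ℝ) 1, 0 ≤ f₁ r)
    (hlin : ∀ r, 0 ≤ r → r ≤ m → f₁ r ≤ ℓ - c * r) (hc : 0 ≤ c) (hs : 0 ≤ s)
    (hm0 : 0 ≤ m) (hm1 : m ≤ 1) {t : ℝ} (ht : t ∈ Icc (0:ℝ) 1) :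
    Real.sqrt (s ^ 2 * f₁ (Real.sqrt (parabola m t)) ^ 2 + parabolaDeriv m t ^ 2 / 4)
      ≤ s * (ℓ - 2 * c * m * (t - t ^ 2)) + 2 * m ^ 2 := by
  obtain ⟨hr_lower, hr_upper⟩ := sqrt_parabola_mem_Icc hm0 ht
  set r := Real.sqrt (parabola m t)
  have hfr : f₁ r ≤ ℓ - 2 * c * m * (t - t ^ 2) := by
    have := hlin r (Real.sqrt_nonneg _) hr_upper
    nlinarith
  have hfr_nonneg : 0 ≤ s * f₁ r :=
    mul_nonneg hs (hnonneg r ⟨Real.sqrt_nonneg _, hr_upper.trans hm1⟩)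
  calc Real.sqrt (s ^ 2 * f₁ r ^ 2 + parabolaDeriv m t ^ 2 / 4)
      = Real.sqrt ((s * f₁ r) ^ 2 + parabolaDeriv m t ^ 2 / 4) := by ring_nf
    _ ≤ s * f₁ r + |parabolaDeriv m t| / 2 := sqrt_sq_add_sq_div_four_le hfr_nonneg _
    _ ≤ s * (ℓ - 2 * c * m * (t - t ^ 2)) + 2 * m ^ 2 := by
      have := abs_parabolaDeriv_le (m := m) ht
      have := mul_le_mul_of_nonneg_left hfr hs
      linarith

lemma energy_parabola_le (hcont : ContinuousOn f₁ (Icc 0 1))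
    (hnonneg : ∀ r ∈ Icc (0:ℝ) 1, 0 ≤ f₁ r)
    (hlin : ∀ r, 0 ≤ r → r ≤ m → f₁ r ≤ ℓ - c * r) (hc : 0 ≤ c) (hs : 0 ≤ s)
    (hm0 : 0 ≤ m) (hm1 : m ≤ 1) :
    energy f₁ s (parabola m) (parabolaDeriv m) ≤ s * ℓ - s * c * m / 3 + 2 * m ^ 2 := by
  have hsqrt_mem : MapsTo (fun t => Real.sqrt (parabola m t)) (Icc 0 1) (Icc 0 1) :=
    fun t ht => ⟨Real.sqrt_nonneg _, (sqrt_parabola_mem_Icc hm0 ht).2.trans hm1⟩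
  have hintegrand_cont : ContinuousOn
      (fun t => Real.sqrt (s ^ 2 * f₁ (Real.sqrt (parabola m t)) ^ 2 + parabolaDeriv m t ^ 2 / 4))
      (uIcc 0 1) := by
    rw [uIcc_of_le zero_le_one]
    have hf_comp : ContinuousOn (fun t => f₁ (Real.sqrt (parabola m t))) (Icc 0 1) :=
      hcont.comp (by unfold parabola; fun_prop) hsqrt_mem
    exact ((continuousOn_const.mul (hf_comp.pow 2)).add
      (by unfold parabolaDeriv; fun_prop)).sqrt
  calc energy f₁ s (parabola m) (parabolaDeriv m)
      ≤ ∫ t in (0:ℝ)..1, (s * ℓ + 2 * m ^ 2 - 2 * s * c * m * (t - t ^ 2)) :=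
        intervalIntegral.integral_mono_on zero_le_one hintegrand_cont.intervalIntegrable
          ((by fun_prop : Continuous _).intervalIntegrable _ _) fun t ht => by
            linarith [energy_integrand_parabola_le hnonneg hlin hc hs hm0 hm1 ht]
    _ = s * ℓ - s * c * m / 3 + 2 * m ^ 2 := by
      rw [intervalIntegral.integral_sub intervalIntegrable_const
          ((by fun_prop : Continuous _).intervalIntegrable _ _),
        intervalIntegral.integral_const_mul, integral_sub_sq_zero_one]
      simp only [intervalIntegral.integral_const, sub_zero, one_smul]
      ring

end ParabolaEnergy

/-- for every `s > 0`, `g₀(s) < ℓ s`. -/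
theorem stmt_4 (ℓ ℓ₁ : ℝ) (f₁ : ℝ → ℝ) (hf : F1Hyp ℓ ℓ₁ f₁)
    (s : ℝ) (hs : 0 < s) :
    g0 f₁ s < ℓ * s := by
  obtain ⟨δ, hδ, hlin⟩ := hf.exists_le_sub_mul
  have hℓ₁ := hf.hl1
  obtain ⟨m, hm0, hm⟩ :=
    exists_between (lt_min hδ (lt_min one_pos (by positivity : 0 < s * ℓ₁ / 12)))
  obtain ⟨hmδ, hm1, hms⟩ : m < δ ∧ m < 1 ∧ m < s * ℓ₁ / 12 := by simpa only [lt_min_iff] using hm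
  calc g0 f₁ s ≤ energy f₁ s (parabola m) (parabolaDeriv m) :=
        g0_le_energy f₁ s (admissible_parabola (abs_le.mpr ⟨by linarith, hm1.le⟩))
    _ ≤ s * ℓ - s * (ℓ₁ / 2) * m / 3 + 2 * m ^ 2 :=
        energy_parabola_le hf.cont hf.nonneg (fun r hr hrm => hlin r hr (hrm.trans_lt hmδ))
          (by positivity) hs.le hm0.le hm1.le
    _ < ℓ * s := by nlinarith
end

section
/- g₀ is Lipschitz continuous on [0,∞) with Lipschitz constant ℓ: for all s, t ≥ 0, |g₀(s) − g₀(t)| ≤ ℓ·|s − t|. -/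
open MeasureTheory Set Filter

/-! The integrand is `√((s F)² + γ'²/4)` with `F = f₁(√γ) ∈ [0, ℓ]`, and `x ↦ √(x² + c)` is
1-Lipschitz, so for each admissible `γ` the energy is `ℓ`-Lipschitz in `s`; an infimum of
uniformly `ℓ`-Lipschitz functions is again `ℓ`-Lipschitz. -/

lemma Real.abs_sqrt_sq_add_sub_sqrt_sq_add_le (a b : ℝ) {c : ℝ} (hc : 0 ≤ c) :
    |√(a ^ 2 + c) - √(b ^ 2 + c)| ≤ |a - b| := by
  suffices key : ∀ a b : ℝ, √(a ^ 2 + c) ≤ √(b ^ 2 + c) + |a - b| by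
    rw [abs_sub_le_iff, sub_le_iff_le_add', sub_le_iff_le_add']
    exact ⟨key a b, abs_sub_comm a b ▸ key b a⟩
  intro a b
  have hb : |b| ≤ √(b ^ 2 + c) := Real.abs_le_sqrt (by linarith)
  have hab : |a| ≤ |b| + |a - b| := by linarith [abs_sub_abs_le_abs_sub a b]
  rw [Real.sqrt_le_left (by positivity), ← sq_abs a]
  nlinarith [Real.sq_sqrt (by positivity : 0 ≤ b ^ 2 + c), pow_le_pow_left₀ (abs_nonneg a) hab 2,
    mul_le_mul_of_nonneg_right hb (abs_nonneg (a - b)), sq_abs b]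

lemma abs_ciInf_sub_ciInf_le {α : Type*} [ConditionallyCompleteLinearOrder α] [AddCommGroup α]
    [IsOrderedAddMonoid α] {ι : Sort*} [Nonempty ι] {f g : ι → α} {C : α}
    (hf : BddBelow (range f)) (hg : BddBelow (range g)) (h : ∀ i, |f i - g i| ≤ C) :
    |(⨅ i, f i) - ⨅ i, g i| ≤ C := by
  rw [abs_sub_le_iff, sub_le_iff_le_add', sub_le_iff_le_add']
  refine ⟨le_ciInf_add fun i => (ciInf_le hf i).trans ?_,
    le_ciInf_add fun i => (ciInf_le hg i).trans ?_⟩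
  · exact sub_le_iff_le_add'.mp (abs_sub_le_iff.mp (h i)).1
  · exact sub_le_iff_le_add'.mp (abs_sub_le_iff.mp (h i)).2

lemma F1Hyp.mapsTo_Icc {ℓ ℓ₁ : ℝ} {f₁ : ℝ → ℝ} (hf : F1Hyp ℓ ℓ₁ f₁) :
    MapsTo f₁ (Icc 0 1) (Icc 0 ℓ) := fun x hx =>
  ⟨hf.nonneg x hx, hf.f10 ▸ hf.anti.antitoneOn (left_mem_Icc.mpr zero_le_one) hx hx.1⟩

namespace Admissible

variable {γ γ' : ℝ → ℝ}

lemma sqrt_mem_Icc (hγ : Admissible γ γ') {t : ℝ} (ht : t ∈ Icc (0:ℝ) 1) :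
    √(γ t) ∈ Icc (0:ℝ) 1 :=
  ⟨Real.sqrt_nonneg _, Real.sqrt_le_one.mpr (hγ.2.2.1 t ht).2⟩

lemma continuousOn (hγ : Admissible γ γ') : ContinuousOn γ (Icc 0 1) := by
  have hprim := intervalIntegral.continuousOn_primitive_interval (a := (0:ℝ)) (b := 1)
    (μ := volume) (by simpa [uIcc_of_le zero_le_one] using hγ.1)
  rw [uIcc_of_le zero_le_one] at hprim
  exact hprim.congr hγ.2.1

end Admissible

section energy

variable {ℓ ℓ₁ : ℝ} {f₁ : ℝ → ℝ} {γ γ' : ℝ → ℝ}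

lemma abs_integrand_sub_integrand_le (hf : F1Hyp ℓ ℓ₁ f₁) (hγ : Admissible γ γ') (s t : ℝ)
    {u : ℝ} (hu : u ∈ Icc (0:ℝ) 1) :
    |√(s ^ 2 * f₁ √(γ u) ^ 2 + γ' u ^ 2 / 4) - √(t ^ 2 * f₁ √(γ u) ^ 2 + γ' u ^ 2 / 4)|
      ≤ ℓ * |s - t| := by
  obtain ⟨hF₀, hFℓ⟩ := hf.mapsTo_Icc (hγ.sqrt_mem_Icc hu)
  calc _ = |√((s * f₁ √(γ u)) ^ 2 + γ' u ^ 2 / 4) - √((t * f₁ √(γ u)) ^ 2 + γ' u ^ 2 / 4)| := by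
        ring_nf
    _ ≤ |s * f₁ √(γ u) - t * f₁ √(γ u)| :=
        Real.abs_sqrt_sq_add_sub_sqrt_sq_add_le _ _ (by positivity)
    _ = |s - t| * f₁ √(γ u) := by rw [← sub_mul, abs_mul, abs_of_nonneg hF₀]
    _ ≤ ℓ * |s - t| := by rw [mul_comm]; exact mul_le_mul_of_nonneg_right hFℓ (abs_nonneg _)

lemma intervalIntegrable_integrand (hf : F1Hyp ℓ ℓ₁ f₁) (hγ : Admissible γ γ') (s : ℝ) :
    IntervalIntegrable (fun u => √(s ^ 2 * f₁ √(γ u) ^ 2 + γ' u ^ 2 / 4)) volume 0 1 := by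
  have hF : ContinuousOn (fun u => f₁ √(γ u)) (Icc 0 1) :=
    hf.cont.comp (Real.continuous_sqrt.comp_continuousOn hγ.continuousOn)
      fun u hu => hγ.sqrt_mem_Icc hu
  rw [intervalIntegrable_iff_integrableOn_Icc_of_le zero_le_one]
  refine Integrable.mono' (g := fun u => |γ' u| / 2 + ℓ * |s|)
    ((hγ.1.abs.div_const 2).add (integrableOn_const measure_Icc_lt_top.ne enorm_ne_top))
    (Continuous.comp_aestronglyMeasurable₂ (g := fun x y => √(s ^ 2 * x ^ 2 + y ^ 2 / 4))
      (by fun_prop) (hF.aestronglyMeasurable measurableSet_Icc) hγ.1.aestronglyMeasurable)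
    (ae_restrict_of_forall_mem measurableSet_Icc fun u hu => ?_)
  have h := abs_sub_le_iff.mp (abs_integrand_sub_integrand_le hf hγ s 0 hu)
  have h0 : √((0:ℝ) ^ 2 * f₁ √(γ u) ^ 2 + γ' u ^ 2 / 4) = |γ' u| / 2 := by
    rw [show (0:ℝ) ^ 2 * f₁ √(γ u) ^ 2 + γ' u ^ 2 / 4 = (γ' u / 2) ^ 2 by ring,
      Real.sqrt_sq_eq_abs, abs_div, abs_two]
  rw [sub_zero, h0] at h
  rw [Real.norm_of_nonneg (Real.sqrt_nonneg _)]
  linarith [h.1]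

lemma abs_energy_sub_energy_le (hf : F1Hyp ℓ ℓ₁ f₁) (hγ : Admissible γ γ') (s t : ℝ) :
    |energy f₁ s γ γ' - energy f₁ t γ γ'| ≤ ℓ * |s - t| :=
  calc |energy f₁ s γ γ' - energy f₁ t γ γ'|
      = ‖∫ u in (0:ℝ)..1, (√(s ^ 2 * f₁ √(γ u) ^ 2 + γ' u ^ 2 / 4)
          - √(t ^ 2 * f₁ √(γ u) ^ 2 + γ' u ^ 2 / 4))‖ := by
        rw [energy, energy, intervalIntegral.integral_sub (intervalIntegrable_integrand hf hγ s)
          (intervalIntegrable_integrand hf hγ t), Real.norm_eq_abs]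
    _ ≤ ℓ * |s - t| * |1 - 0| := intervalIntegral.norm_integral_le_of_norm_le_const
        fun u hu => abs_integrand_sub_integrand_le hf hγ s t
          (Ioc_subset_Icc_self (uIoc_of_le (zero_le_one (α := ℝ)) ▸ hu))
    _ = ℓ * |s - t| := by norm_num

lemma energy_nonneg (s : ℝ) (γ γ' : ℝ → ℝ) : 0 ≤ energy f₁ s γ γ' :=
  intervalIntegral.integral_nonneg zero_le_one fun _ _ => Real.sqrt_nonneg _

end energy

lemma admissible_zero : Admissible 0 0 :=
  ⟨integrableOn_zero, fun _ _ => by simp, fun _ _ => by simp, rfl, rfl⟩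

lemma g0_eq_iInf (f₁ : ℝ → ℝ) (s : ℝ) :
    g0 f₁ s = ⨅ p : {p : (ℝ → ℝ) × (ℝ → ℝ) // Admissible p.1 p.2}, energy f₁ s p.1.1 p.1.2 := by
  rw [g0, iInf]
  congr 1
  ext x
  simp [eq_comm]

/-- `g₀` is Lipschitz on `[0,∞)` with constant `ℓ`. -/
theorem stmt_5 (ℓ ℓ₁ : ℝ) (f₁ : ℝ → ℝ) (hf : F1Hyp ℓ ℓ₁ f₁) :
    ∀ s t : ℝ, 0 ≤ s → 0 ≤ t → |g0 f₁ s - g0 f₁ t| ≤ ℓ * |s - t| := by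
  intro s t _ _
  have : Nonempty {p : (ℝ → ℝ) × (ℝ → ℝ) // Admissible p.1 p.2} := ⟨⟨(0, 0), admissible_zero⟩⟩
  rw [g0_eq_iInf, g0_eq_iInf]
  exact abs_ciInf_sub_ciInf_le ⟨0, forall_mem_range.mpr fun _ => energy_nonneg _ _ _⟩
    ⟨0, forall_mem_range.mpr fun _ => energy_nonneg _ _ _⟩
    fun p => abs_energy_sub_energy_le hf p.2 s t
end
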